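/- Let C = C(I, A, (r_i)_{i∈I}, (C^a)_{a∈A}) be a Cartan scheme and (R^a)_{a∈A} a root system of type C. Then for all a ∈ A and all i,j ∈ I with i ≠ j, the set { m ∈ ℕ₀ : ε_j + m ε_i ∈ R^a_+ } has a maximum, and this maximum equals −c^a_{ij}. -/
import Mathlib


variable {I : Type*} [Fintype I] [DecidableEq I]

/-- The standard basis vector `ε_i` of `ℤ^I`. -/
def eps (i : I) : I → ℤ := Pi.single i 1

/-- The reflection `σ_i ∈ Aut(ℤ^I)` attached to a row `c i ·` of a generalized
Cartan matrix: `σ_i(ε_j) = ε_j − c_{ij} ε_i`. -/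
def sigmaMat (c : I → I → ℤ) (i : I) (x : I → ℤ) : I → ℤ :=
  x - (∑ j, c i j * x j) • eps i

lemma eps_apply (i k : I) : eps i k = if k = i then 1 else 0 := by
  simp [eps, Pi.single_apply]

lemma sigma_apply (c : I → I → ℤ) {i j : I} (hcii : c i i = 2) (hij : i ≠ j) (t : ℤ) :
    sigmaMat c i (eps j + t • eps i) = eps j + (-c i j - t) • eps i := by
  have hsum : ∑ k, c i k * (eps j + t • eps i) k = c i j + 2 * t := by
    have hk : ∀ k, c i k * (eps j + t • eps i) k
        = (if k = j then c i k else 0) + t * (if k = i then c i k else 0) := by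
      intro k
      simp [eps_apply]
      split_ifs with h1 h2 h2 <;> simp_all <;> ring
    rw [Finset.sum_congr rfl fun k _ => hk k, Finset.sum_add_distrib]
    rw [Finset.sum_ite_eq' Finset.univ j (fun k => c i k)]
    rw [← Finset.mul_sum, Finset.sum_ite_eq' Finset.univ i (fun k => c i k)]
    simp [hcii]; ring
  funext k
  have hdef : sigmaMat c i (eps j + t • eps i) k
      = (eps j + t • eps i) k - (∑ l, c i l * (eps j + t • eps i) l) * eps i k := rfl
  rw [hdef, hsum]
  simp only [Pi.add_apply, Pi.smul_apply, smul_eq_mul]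
  ring

/-- Lemma (le:cm): in a root system of type a Cartan scheme, for `i ≠ j` the
set `{m ∈ ℕ₀ | ε_j + m ε_i ∈ R^a_+}` has greatest element `−c^a_{ij}`. -/
theorem neg_cartan_eq_max {A : Type*} [Nonempty A]
    (r : I → A → A) (C : A → I → I → ℤ) (R : A → Set (I → ℤ))
    -- Cartan scheme axioms
    (hr : ∀ i a, r i (r i a) = a)
    (hC1 : ∀ a i, C a i i = 2)
    (hC2 : ∀ a i j, i ≠ j → C a i j ≤ 0)
    (hC3 : ∀ a i j, C a i j = 0 → C a j i = 0)
    (hCr : ∀ a i j, C a i j = C (r i a) i j)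
    -- root system axioms, with `R^a_+ = R^a ∩ ℕ₀^I`
    (hR1 : ∀ a x, x ∈ R a ↔
      (x ∈ R a ∧ ∀ i, 0 ≤ x i) ∨ (-x ∈ R a ∧ ∀ i, 0 ≤ -x i))
    (hR2 : ∀ a i, {x | x ∈ R a ∧ ∃ n : ℤ, x = n • eps i} = {eps i, -eps i})
    (hR3 : ∀ a i, sigmaMat (C a) i '' R a = R (r i a))
    (hR4 : ∀ a i j, i ≠ j →
      (R a ∩ {x | ∃ m n : ℕ, x = (m : ℤ) • eps i + (n : ℤ) • eps j}).Finite →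
      (fun b => r i (r j b))^[(R a ∩
        {x | ∃ m n : ℕ, x = (m : ℤ) • eps i + (n : ℤ) • eps j}).ncard] a = a)
    (a : A) (i j : I) (hij : i ≠ j) :
    IsGreatest {m : ℕ |
        eps j + (m : ℤ) • eps i ∈ R a ∧ ∀ k, 0 ≤ (eps j + (m : ℤ) • eps i) k}
      (-(C a i j)).toNat := by
  have hcij : C a i j ≤ 0 := hC2 a i j hij
  have hcast : ((-(C a i j)).toNat : ℤ) = -(C a i j) := Int.toNat_of_nonneg (by omega)
  constructor
  · -- membership
    have hej : eps j ∈ R (r i a) := by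
      have hmem : eps j ∈ ({eps j, -eps j} : Set (I → ℤ)) := by left; rfl
      rw [← hR2 (r i a) j] at hmem
      exact hmem.1
    have himg : sigmaMat (C (r i a)) i (eps j) ∈ R a := by
      have hs := hR3 (r i a) i
      rw [hr i a] at hs
      rw [← hs]
      exact ⟨eps j, hej, rfl⟩
    have heq : sigmaMat (C (r i a)) i (eps j) = eps j + (-(C a i j)) • eps i := by
      have h0 := sigma_apply (C (r i a)) (hC1 (r i a) i) hij 0
      rw [hCr a i j]
      simpa using h0
    rw [heq] at himg
    refine ⟨by rw [hcast]; exact himg, ?_⟩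
    intro k
    rw [hcast]
    simp only [Pi.add_apply, Pi.smul_apply, smul_eq_mul, eps_apply]
    split_ifs <;> simp <;> omega
  · -- upper bound
    intro m hm
    obtain ⟨hmR, -⟩ := hm
    have hy : sigmaMat (C a) i (eps j + (m : ℤ) • eps i) ∈ R (r i a) := by
      rw [← hR3 a i]
      exact ⟨_, hmR, rfl⟩
    rw [sigma_apply (C a) (hC1 a i) hij] at hy
    rcases (hR1 (r i a) _).mp hy with ⟨-, hpos⟩ | ⟨-, hneg⟩
    · have h := hpos i
      simp [eps_apply, hij] at h
      omega
    · have h := hneg j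
      simp [eps_apply, hij.symm] at h
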